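/- arXiv:0907.2470 — 4 statements merged into one kernel-verified Lean document; each statement's English description precedes it below -/
import Mathlib

section
/- Let T = 32T₀ : X → X and for k ≥ 1 set E_k = ε # φ_{k−1}. Then: (1) T(E₁) = E₁ + E₂ + 6t; (2) for k > 1, T(E_k) = E_{k−1} + E_{k+1} + (8k−2)t + (ε # ε); (3) T(ε # ε) = 4(ε # ε) + 4t, and T(t) = 16t, where t denotes the identity function t ↦ t in X. -/
open scoped BigOperators

noncomputable section

attribute [local instance] Classical.propDecidable

/-- `I`: the set of dyadic rationals in `[0,1]`. -/
def dyadicI : Set ℚ := {t | 0 ≤ t ∧ t ≤ 1 ∧ ∃ i n : ℕ, t = (i : ℚ) / 2 ^ n}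

/-- `X` is the ℚ-vector space of functions `I → ℚ`. -/
abbrev X : Type := dyadicI → ℚ

lemma dyadicI_mem {i n : ℕ} (h : i ≤ 2 ^ n) : (i : ℚ) / 2 ^ n ∈ dyadicI := by
  refine ⟨by positivity, ?_, i, n, rfl⟩
  rw [div_le_one (by positivity)]
  exact_mod_cast h

lemma zero_mem_dyadicI : (0 : ℚ) ∈ dyadicI := by
  simpa using dyadicI_mem (i := 0) (n := 0) (by norm_num)

lemma one_mem_dyadicI : (1 : ℚ) ∈ dyadicI := by
  simpa using dyadicI_mem (i := 1) (n := 0) (by norm_num)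

lemma half_mem_dyadicI : (1 / 2 : ℚ) ∈ dyadicI := by
  have := dyadicI_mem (i := 1) (n := 1) (by norm_num)
  norm_num at this ⊢
  exact this

/-- Evaluation of `α : X` at a rational, extended by `0` off `I`. -/
def evI (α : X) (t : ℚ) : ℚ := if h : t ∈ dyadicI then α ⟨t, h⟩ else 0

/-- The map `T₀ : X → X`, `(T₀ α)(t) = α (t/2)`. -/
def T0 (α : X) : X := fun t => evI α (t.1 / 2)

/-- The map `T₁ : X → X`, `(T₁ α)(t) = α ((1+t)/2)`. -/
def T1 (α : X) : X := fun t => evI α ((1 + t.1) / 2)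

/-- Auxiliary recursion (on the exponent of the denominator) defining `α # β`. -/
def hashAux : ℕ → X → X → ℚ → ℚ
  | 0, α, β, t =>
      if t = 0 then 0 else (evI α 1 - evI α 0) * (evI β 1 - evI β 0)
  | n + 1, α, β, t =>
      if t ≤ 1 / 2 then
        hashAux n (T0 α) (T0 β) (2 * t) + hashAux n (T1 α) (T1 β) (2 * t)
      else
        hashAux n (T0 α) (T0 β) 1 + hashAux n (T1 α) (T1 β) 1 +
          hashAux n (T0 α) (T1 β) (2 * t - 1) + hashAux n (T1 α) (T0 β) (2 * t - 1)

/-- The product `α # β` on `X`. -/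
def hash (α β : X) : X := fun t => hashAux (padicValNat 2 t.1.den) α β t.1

/-- The element `t ↦ t` of `X`. -/
def tId : X := fun t => t.1

/-- The element `ε : t ↦ t − t²` of `X`. -/
def epsX : X := fun t => t.1 - t.1 ^ 2

/-- The constant function `1` in `X`. -/
def oneX : X := fun _ => (1 : ℚ)

/-- Convexity: `2α(i/q) ≥ α((i−1)/q) + α((i+1)/q)` for all powers of two `q = 2^n`, `0 < i < q`. -/
def ConvexX (α : X) : Prop :=
  ∀ n i : ℕ, 0 < i → i < 2 ^ n →
    evI α (((i : ℚ) - 1) / 2 ^ n) + evI α (((i : ℚ) + 1) / 2 ^ n)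
      ≤ 2 * evI α ((i : ℚ) / 2 ^ n)

/-- `α` is Lipschitz with constant `m`. -/
def LipschitzQ (m : ℚ) (α : X) : Prop :=
  ∀ s t : dyadicI, |α s - α t| ≤ m * |s.1 - t.1|

/-- The point `2^{-n}` of `I`. -/
def invPow (n : ℕ) : dyadicI :=
  ⟨1 / 2 ^ n, by simpa using dyadicI_mem (i := 1) (n := n) Nat.one_le_two_pow⟩

/-- `μ` is the Hilbert–Kunz multiplicity of `α`, i.e. `μ = lim 2^n α(2^{-n})`. -/
def IsHKmu (α : X) (μ : ℝ) : Prop :=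
  Filter.Tendsto (fun n : ℕ => ((2 ^ n * α (invPow n) : ℚ) : ℝ)) Filter.atTop (nhds μ)

/-- The series `S_α = Σ α(2^{-n}) (2w)^n = Σ (2^n α(2^{-n})) w^n`. -/
def hkSeries (α : X) : PowerSeries ℚ := PowerSeries.mk fun n => 2 ^ n * α (invPow n)

/-- Auxiliary recursion defining the functions `φ_m`. -/
def phiAux : ℕ → ℕ → ℚ → ℚ
  | 0, _, _ => 0
  | n + 1, m, t =>
      if t ≤ 1 / 2 then
        if m % 2 = 0 then (phiAux n (m + 1) (2 * t) + (8 * (m : ℚ) + 6) * t) / 8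
        else (phiAux n (m - 1) (2 * t) + ((2 * t) - (2 * t) ^ 2) + (8 * (m : ℚ) + 6) * t) / 8
      else
        if m = 0 then (phiAux n 0 (2 * t - 1) + 6 * (1 - t)) / 8
        else if m % 2 = 0 then
          (phiAux n (m - 1) (2 * t - 1) + ((2 * t - 1) - (2 * t - 1) ^ 2)
            + (8 * (m : ℚ) + 6) * (1 - t)) / 8
        else (phiAux n (m + 1) (2 * t - 1) + (8 * (m : ℚ) + 6) * (1 - t)) / 8

/-- The functions `φ_m ∈ X` of Definition 2.2. -/
def phiM (m : ℕ) : X := fun t => phiAux (padicValNat 2 t.1.den) m t.1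

/-- `ℕ` with the Nim-sum (bitwise XOR) as its (commutative) monoid operation. -/
def NimNat : Type := ℕ

instance : CommMonoid NimNat where
  mul a b := Nat.xor a b
  one := (0 : ℕ)
  mul_assoc := Nat.xor_assoc
  mul_comm := Nat.xor_comm
  one_mul := Nat.zero_xor
  mul_one := Nat.xor_zero

/-- The ring `Γ`: free `ℤ`-module on `λ₀, λ₁, …` with `λᵢλⱼ = λ_{i XOR j}`. -/
abbrev GammaZ : Type := MonoidAlgebra ℤ NimNat

/-- The ring `Γ_Q = Γ ⊗ ℚ`. -/
abbrev GammaQ : Type := MonoidAlgebra ℚ NimNat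

/-- The basis element `λᵢ` of `Γ`. -/
def lamZ (i : ℕ) : GammaZ := MonoidAlgebra.single (show NimNat from i) 1

/-- The basis element `λᵢ` of `Γ_Q`. -/
def lamQ (i : ℕ) : GammaQ := MonoidAlgebra.single (show NimNat from i) 1

/-- `δ_r = λ₀ − λ₁ + ⋯ + (−1)^{r−1} λ_{r−1}` in `Γ`. -/
def deltaZ (r : ℕ) : GammaZ := ∑ i ∈ Finset.range r, ((-1 : ℤ) ^ i) • lamZ i

/-- `δ_r` in `Γ_Q`. -/
def deltaQ (r : ℕ) : GammaQ := ∑ i ∈ Finset.range r, ((-1 : ℚ) ^ i) • lamQ i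

/-- `L_n(α) = Σ_{i=0}^{2^n−1} (α((i+1)/2^n) − α(i/2^n)) (−1)^i λᵢ ∈ Γ_Q`. -/
def Ln (n : ℕ) (α : X) : GammaQ :=
  ∑ i ∈ Finset.range (2 ^ n),
    ((-1 : ℚ) ^ i * (evI α (((i : ℚ) + 1) / 2 ^ n) - evI α ((i : ℚ) / 2 ^ n))) • lamQ i

/-- The Hilbert–Kunz function `φ_f ∈ X` of a power series `f`:
`φ_f(i/q) = q^{-r} · dim_F F[[u₁,…,u_r]]/(u₁^q,…,u_r^q,f^i)`. -/
def phiF {F : Type} [Field F] {σ : Type} (f : MvPowerSeries σ F) : X := fun t =>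
  ((Module.finrank F
      (MvPowerSeries σ F ⧸ Ideal.span
        (Set.range (fun j : σ => (MvPowerSeries.X j : MvPowerSeries σ F) ^ t.1.den)
          ∪ {f ^ t.1.num.toNat}))) : ℚ)
    / (t.1.den : ℚ) ^ (Nat.card σ)

/-- The natural inclusion `F[[u_j : j ∈ σ]] → F[[u_j : j ∈ τ]]` along an injection `e : σ → τ`. -/
def embPS {F : Type} [Field F] {σ τ : Type} (e : σ → τ) (f : MvPowerSeries σ F) :
    MvPowerSeries τ F := fun d =>
  if h : ∃ d' : σ →₀ ℕ, Finsupp.mapDomain e d' = d then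
    MvPowerSeries.coeff h.choose f
  else 0

/-!
The recursion defining `#` is the identity `T₀(α # β) = T₀α # T₀β + T₁α # T₁β` in `X`. With
bilinearity and symmetry of `#`, `1 # β = 0`, `t # β = (β(1) - β(0)) t`, and
`T₀ε = (ε + t)/4`, `T₁ε = (ε + 1 - t)/4`, it gives
`T₀(ε # β) = (ε # (T₀β + T₁β) + (2β(1/2) - β(1) - β(0)) t)/4`.
The recursion for `φ_m` gives `φ_m(1/2) = (4m + 3)/8` and
`T₀φ_m + T₁φ_m = (φ_{m-1} + φ_{m+1} + ε + 4m + 3)/8` for `m ≥ 1` (`(φ₀ + φ₁ + 3)/8` for `m = 0`),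
so each identity is a linear combination of these.

The pointwise facts about `#` and `φ_m` are proved by induction on the level `n` of a point
`i / 2ⁿ`: at such a point the recursions `hashAux k`, `phiAux k` truncated at any `k ≥ n` already
compute `#` and `φ_m`.
-/

namespace DyadicHash

def dyadicLevel (n : ℕ) : Set ℚ := {t | 0 ≤ t ∧ t ≤ 1 ∧ ∃ i : ℤ, t = i / 2 ^ n}

section DyadicLevel

variable {n : ℕ} {t : ℚ}

lemma zero_mem_dyadicLevel (n : ℕ) : (0 : ℚ) ∈ dyadicLevel n :=
  ⟨le_rfl, zero_le_one, 0, by simp⟩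

lemma one_mem_dyadicLevel (n : ℕ) : (1 : ℚ) ∈ dyadicLevel n :=
  ⟨zero_le_one, le_rfl, 2 ^ n, by push_cast; rw [div_self (by positivity)]⟩

lemma eq_zero_or_eq_one_of_mem_dyadicLevel_zero (h : t ∈ dyadicLevel 0) : t = 0 ∨ t = 1 := by
  obtain ⟨h0, h1, i, rfl⟩ := h
  simp only [pow_zero, div_one] at h0 h1 ⊢
  have hi0 : 0 ≤ i := by exact_mod_cast h0
  have hi1 : i ≤ 1 := by exact_mod_cast h1
  interval_cases i <;> simp

lemma dyadicLevel_succ_subset : dyadicLevel n ⊆ dyadicLevel (n + 1) := by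
  rintro t ⟨h0, h1, i, rfl⟩
  exact ⟨h0, h1, 2 * i, by push_cast; ring⟩

lemma dyadicLevel_mono : Monotone dyadicLevel :=
  monotone_nat_of_le_succ fun _ => dyadicLevel_succ_subset

lemma two_mul_mem_dyadicLevel (h : t ∈ dyadicLevel (n + 1)) (ht : t ≤ 1 / 2) :
    2 * t ∈ dyadicLevel n := by
  obtain ⟨h0, -, i, rfl⟩ := h
  exact ⟨by positivity, by linarith, i, by ring⟩

lemma two_mul_sub_one_mem_dyadicLevel (h : t ∈ dyadicLevel (n + 1)) (ht : 1 / 2 ≤ t) :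
    2 * t - 1 ∈ dyadicLevel n := by
  obtain ⟨-, h1, i, rfl⟩ := h
  refine ⟨by linarith, by linarith, i - 2 ^ n, ?_⟩
  push_cast
  field_simp
  ring

lemma div_two_mem_dyadicLevel (h : t ∈ dyadicLevel n) : t / 2 ∈ dyadicLevel (n + 1) := by
  obtain ⟨h0, h1, i, rfl⟩ := h
  exact ⟨by positivity, by linarith, i, by ring⟩

lemma one_add_div_two_mem_dyadicLevel (h : t ∈ dyadicLevel n) :
    (1 + t) / 2 ∈ dyadicLevel (n + 1) := by
  obtain ⟨h0, h1, i, rfl⟩ := h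
  refine ⟨by positivity, by linarith, 2 ^ n + i, ?_⟩
  push_cast
  field_simp
  ring

lemma mem_dyadicI_iff : t ∈ dyadicI ↔ ∃ n, t ∈ dyadicLevel n := by
  constructor
  · rintro ⟨h0, h1, i, n, rfl⟩
    exact ⟨n, h0, h1, i, by push_cast; rfl⟩
  · rintro ⟨n, h0, h1, i, rfl⟩
    have hi : (0 : ℚ) ≤ i := by
      by_contra hneg
      linarith [div_neg_of_neg_of_pos (not_le.mp hneg) (by positivity : (0 : ℚ) < 2 ^ n)]
    lift i to ℕ using by exact_mod_cast hi
    exact ⟨h0, h1, i, n, by push_cast; rfl⟩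

lemma div_two_mem_dyadicI (h : t ∈ dyadicI) : t / 2 ∈ dyadicI := by
  obtain ⟨n, hn⟩ := mem_dyadicI_iff.mp h
  exact mem_dyadicI_iff.mpr ⟨n + 1, div_two_mem_dyadicLevel hn⟩

lemma one_add_div_two_mem_dyadicI (h : t ∈ dyadicI) : (1 + t) / 2 ∈ dyadicI := by
  obtain ⟨n, hn⟩ := mem_dyadicI_iff.mp h
  exact mem_dyadicI_iff.mpr ⟨n + 1, one_add_div_two_mem_dyadicLevel hn⟩

lemma exists_den_eq_two_pow (h : t ∈ dyadicLevel n) : ∃ k ≤ n, t.den = 2 ^ k := by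
  obtain ⟨-, -, i, rfl⟩ := h
  have hdvd : ((i : ℚ) / 2 ^ n).den ∣ 2 ^ n := by
    have := Rat.den_dvd i (2 ^ n)
    rw [Rat.divInt_eq_div] at this
    push_cast at this
    exact_mod_cast this
  exact (Nat.dvd_prime_pow Nat.prime_two).mp hdvd

lemma padicValNat_den_le (h : t ∈ dyadicLevel n) : padicValNat 2 t.den ≤ n := by
  obtain ⟨k, hk, hden⟩ := exists_den_eq_two_pow h
  rwa [hden, padicValNat.prime_pow]

lemma mem_dyadicLevel_padicValNat_den (h : t ∈ dyadicLevel n) :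
    t ∈ dyadicLevel (padicValNat 2 t.den) := by
  obtain ⟨k, -, hden⟩ := exists_den_eq_two_pow h
  refine ⟨h.1, h.2.1, t.num, ?_⟩
  rw [hden, padicValNat.prime_pow]
  exact_mod_cast (hden ▸ Rat.num_div_den t).symm

end DyadicLevel

@[elab_as_elim]
theorem dyadicLevel_induction {P : ℕ → ℚ → Prop} (zero : P 0 0) (one : P 0 1)
    (left : ∀ n t, t ≤ 1 / 2 → P n (2 * t) → P (n + 1) t)
    (right : ∀ n t, 1 / 2 < t → P n (2 * t - 1) → P n 1 → P (n + 1) t)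
    {n : ℕ} {t : ℚ} (h : t ∈ dyadicLevel n) : P n t := by
  induction n generalizing t with
  | zero =>
    rcases eq_zero_or_eq_one_of_mem_dyadicLevel_zero h with rfl | rfl
    exacts [zero, one]
  | succ n ih =>
    by_cases ht : t ≤ 1 / 2
    · exact left n t ht (ih (two_mul_mem_dyadicLevel h ht))
    · have ht' : 1 / 2 < t := not_le.mp ht
      exact right n t ht' (ih (two_mul_sub_one_mem_dyadicLevel h ht'.le))
        (ih (one_mem_dyadicLevel n))

lemma apply_padicValNat_den_eq {F : ℕ → ℚ → ℚ}
    (hF : ∀ {n t}, t ∈ dyadicLevel n → F (n + 1) t = F n t) {n : ℕ} {t : ℚ}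
    (h : t ∈ dyadicLevel n) : F (padicValNat 2 t.den) t = F n t := by
  have hv := mem_dyadicLevel_padicValNat_den h
  induction n, padicValNat_den_le h using Nat.le_induction with
  | base => rfl
  | succ n hle ih => rw [hF (dyadicLevel_mono hle hv), ih (dyadicLevel_mono hle hv)]

section Evaluation

variable {t : ℚ}

lemma evI_of_mem {α : X} (h : t ∈ dyadicI) : evI α t = α ⟨t, h⟩ := dif_pos h

lemma evI_coe (α : X) (s : dyadicI) : evI α s = α s := evI_of_mem s.2

lemma evI_add (α β : X) (t : ℚ) : evI (α + β) t = evI α t + evI β t := by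
  unfold evI; split <;> simp

lemma evI_smul (a : ℚ) (α : X) (t : ℚ) : evI (a • α) t = a * evI α t := by
  unfold evI; split <;> simp

lemma evI_oneX (h : t ∈ dyadicI) : evI oneX t = 1 := evI_of_mem h

lemma evI_tId (h : t ∈ dyadicI) : evI tId t = t := evI_of_mem h

lemma evI_epsX (h : t ∈ dyadicI) : evI epsX t = t - t ^ 2 := evI_of_mem h

lemma evI_epsX_zero : evI epsX 0 = 0 := by simp [evI_epsX zero_mem_dyadicI]

lemma evI_epsX_one : evI epsX 1 = 0 := by simp [evI_epsX one_mem_dyadicI]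

lemma evI_T0_zero (α : X) : evI (T0 α) 0 = evI α 0 := by
  simp [evI_of_mem zero_mem_dyadicI, T0]

lemma evI_T0_one (α : X) : evI (T0 α) 1 = evI α (1 / 2) := by
  simp [evI_of_mem one_mem_dyadicI, T0]

lemma evI_T1_zero (α : X) : evI (T1 α) 0 = evI α (1 / 2) := by
  simp [evI_of_mem zero_mem_dyadicI, T1]

lemma evI_T1_one (α : X) : evI (T1 α) 1 = evI α 1 := by
  norm_num [evI_of_mem one_mem_dyadicI, T1]

end Evaluation

section Shifts

lemma T0_add (α β : X) : T0 (α + β) = T0 α + T0 β := funext fun _ => evI_add α β _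

lemma T1_add (α β : X) : T1 (α + β) = T1 α + T1 β := funext fun _ => evI_add α β _

lemma T0_smul (a : ℚ) (α : X) : T0 (a • α) = a • T0 α := funext fun _ => evI_smul a α _

lemma T1_smul (a : ℚ) (α : X) : T1 (a • α) = a • T1 α := funext fun _ => evI_smul a α _

lemma T0_oneX : T0 oneX = oneX := funext fun s => evI_oneX (div_two_mem_dyadicI s.2)

lemma T1_oneX : T1 oneX = oneX := funext fun s => evI_oneX (one_add_div_two_mem_dyadicI s.2)

lemma T0_tId : T0 tId = (2 : ℚ)⁻¹ • tId := by
  funext s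
  simp only [T0, evI_tId (div_two_mem_dyadicI s.2), tId, Pi.smul_apply, smul_eq_mul]
  ring

lemma T1_tId : T1 tId = (2 : ℚ)⁻¹ • (oneX + tId) := by
  funext s
  simp only [T1, evI_tId (one_add_div_two_mem_dyadicI s.2), oneX, tId, Pi.smul_apply,
    Pi.add_apply, smul_eq_mul]
  ring

lemma T0_epsX : T0 epsX = (4 : ℚ)⁻¹ • (epsX + tId) := by
  funext s
  simp only [T0, evI_epsX (div_two_mem_dyadicI s.2), epsX, tId, Pi.smul_apply,
    Pi.add_apply, smul_eq_mul]
  ring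

lemma T1_epsX : T1 epsX = (4 : ℚ)⁻¹ • (epsX + oneX - tId) := by
  funext s
  simp only [T1, evI_epsX (one_add_div_two_mem_dyadicI s.2), epsX, oneX, tId, Pi.smul_apply,
    Pi.add_apply, Pi.sub_apply, smul_eq_mul]
  ring

end Shifts

section Product

variable {n : ℕ} {t : ℚ}

lemma hashAux_succ_of_le_half (α β : X) (ht : t ≤ 1 / 2) :
    hashAux (n + 1) α β t =
      hashAux n (T0 α) (T0 β) (2 * t) + hashAux n (T1 α) (T1 β) (2 * t) :=
  if_pos ht

lemma hashAux_succ_of_half_lt (α β : X) (ht : 1 / 2 < t) :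
    hashAux (n + 1) α β t =
      hashAux n (T0 α) (T0 β) 1 + hashAux n (T1 α) (T1 β) 1 +
        hashAux n (T0 α) (T1 β) (2 * t - 1) + hashAux n (T1 α) (T0 β) (2 * t - 1) :=
  if_neg (not_le.mpr ht)

lemma hashAux_add_left (n : ℕ) (α α' β : X) (t : ℚ) :
    hashAux n (α + α') β t = hashAux n α β t + hashAux n α' β t := by
  induction n generalizing α α' β t with
  | zero =>
    simp only [hashAux, evI_add]
    split_ifs <;> ring
  | succ n ih =>
    simp only [hashAux, T0_add, T1_add, ih]
    split_ifs <;> ring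

lemma hashAux_smul_left (n : ℕ) (a : ℚ) (α β : X) (t : ℚ) :
    hashAux n (a • α) β t = a * hashAux n α β t := by
  induction n generalizing α β t with
  | zero =>
    simp only [hashAux, evI_smul]
    split_ifs <;> ring
  | succ n ih =>
    simp only [hashAux, T0_smul, T1_smul, ih]
    split_ifs <;> ring

lemma hashAux_comm (n : ℕ) (α β : X) (t : ℚ) : hashAux n α β t = hashAux n β α t := by
  induction n generalizing α β t with
  | zero =>
    simp only [hashAux]
    split_ifs <;> ring
  | succ n ih =>
    simp only [hashAux, ih (T0 α), ih (T1 α)]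
    split_ifs <;> ring

lemma hashAux_oneX_left (n : ℕ) (β : X) (t : ℚ) : hashAux n oneX β t = 0 := by
  induction n generalizing β t with
  | zero => simp [hashAux, evI_oneX zero_mem_dyadicI, evI_oneX one_mem_dyadicI]
  | succ n ih => simp [hashAux, T0_oneX, T1_oneX, ih]

lemma hashAux_add_right (n : ℕ) (α β β' : X) (t : ℚ) :
    hashAux n α (β + β') t = hashAux n α β t + hashAux n α β' t := by
  simp only [hashAux_comm n α, hashAux_add_left]

lemma hashAux_smul_right (n : ℕ) (a : ℚ) (α β : X) (t : ℚ) :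
    hashAux n α (a • β) t = a * hashAux n α β t := by
  simp only [hashAux_comm n α, hashAux_smul_left]

lemma hashAux_oneX_right (n : ℕ) (α : X) (t : ℚ) : hashAux n α oneX t = 0 := by
  rw [hashAux_comm, hashAux_oneX_left]

lemma hashAux_succ_of_mem (h : t ∈ dyadicLevel n) (α β : X) :
    hashAux (n + 1) α β t = hashAux n α β t := by
  revert α β
  refine dyadicLevel_induction ?_ ?_ ?_ ?_ h
  · simp [hashAux]
  · intro α β
    norm_num [hashAux, evI_T0_zero, evI_T0_one, evI_T1_zero, evI_T1_one]
    ring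
  · intro n t ht ih α β
    rw [hashAux_succ_of_le_half _ _ ht, hashAux_succ_of_le_half _ _ ht, ih, ih]
  · intro n t ht ih ih₁ α β
    rw [hashAux_succ_of_half_lt _ _ ht, hashAux_succ_of_half_lt _ _ ht, ih, ih, ih₁, ih₁]

lemma evI_hash (h : t ∈ dyadicLevel n) (α β : X) : evI (hash α β) t = hashAux n α β t :=
  (evI_of_mem (mem_dyadicI_iff.mpr ⟨n, h⟩)).trans
    (apply_padicValNat_den_eq (F := fun n t => hashAux n α β t)
      (fun h => hashAux_succ_of_mem h α β) h)

lemma hash_apply {s : dyadicI} (hs : s.1 ∈ dyadicLevel n) (α β : X) :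
    hash α β s = hashAux n α β s := by
  rw [← evI_coe (hash α β) s, evI_hash hs]

lemma hashAux_tId_left (h : t ∈ dyadicLevel n) (β : X) :
    hashAux n tId β t = (evI β 1 - evI β 0) * t := by
  revert β
  refine dyadicLevel_induction ?_ ?_ ?_ ?_ h
  · simp [hashAux]
  · simp [hashAux, evI_tId zero_mem_dyadicI, evI_tId one_mem_dyadicI]
  · intro n t ht ih β
    rw [hashAux_succ_of_le_half _ _ ht, T0_tId, T1_tId]
    simp only [hashAux_smul_left, hashAux_add_left, hashAux_oneX_left, ih, evI_T0_zero,
      evI_T0_one, evI_T1_zero, evI_T1_one]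
    ring
  · intro n t ht ih ih₁ β
    rw [hashAux_succ_of_half_lt _ _ ht, T0_tId, T1_tId]
    simp only [hashAux_smul_left, hashAux_add_left, hashAux_oneX_left, ih, ih₁, evI_T0_zero,
      evI_T0_one, evI_T1_zero, evI_T1_one]
    ring

lemma hash_add_left (α α' β : X) : hash (α + α') β = hash α β + hash α' β :=
  funext fun _ => hashAux_add_left _ _ _ _ _

lemma hash_add_right (α β β' : X) : hash α (β + β') = hash α β + hash α β' :=
  funext fun _ => hashAux_add_right _ _ _ _ _

lemma hash_smul_left (a : ℚ) (α β : X) : hash (a • α) β = a • hash α β :=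
  funext fun _ => hashAux_smul_left _ _ _ _ _

lemma hash_smul_right (a : ℚ) (α β : X) : hash α (a • β) = a • hash α β :=
  funext fun _ => hashAux_smul_right _ _ _ _ _

lemma hash_sub_left (α α' β : X) : hash (α - α') β = hash α β - hash α' β :=
  eq_sub_of_add_eq (by rw [← hash_add_left, sub_add_cancel])

lemma hash_sub_right (α β β' : X) : hash α (β - β') = hash α β - hash α β' :=
  eq_sub_of_add_eq (by rw [← hash_add_right, sub_add_cancel])

lemma hash_oneX_left (β : X) : hash oneX β = 0 := funext fun _ => hashAux_oneX_left _ _ _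

lemma hash_oneX_right (α : X) : hash α oneX = 0 := funext fun _ => hashAux_oneX_right _ _ _

lemma hash_tId_left (β : X) : hash tId β = (evI β 1 - evI β 0) • tId := by
  funext s
  obtain ⟨n, hs⟩ := mem_dyadicI_iff.mp s.2
  rw [hash_apply hs, hashAux_tId_left hs]
  rfl

lemma hash_tId_right (α : X) : hash α tId = (evI α 1 - evI α 0) • tId := by
  rw [← hash_tId_left]
  exact funext fun _ => hashAux_comm _ _ _ _

lemma T0_hash (α β : X) : T0 (hash α β) = hash (T0 α) (T0 β) + hash (T1 α) (T1 β) := by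
  funext s
  obtain ⟨n, hs⟩ := mem_dyadicI_iff.mp s.2
  have hs2 : s.1 / 2 ≤ 1 / 2 := by linarith [s.2.2.1]
  rw [T0, evI_hash (div_two_mem_dyadicLevel hs), hashAux_succ_of_le_half _ _ hs2,
    mul_div_cancel₀ _ two_ne_zero, Pi.add_apply, hash_apply hs, hash_apply hs]

end Product

section Phi

variable {n m : ℕ} {t : ℚ}

lemma phiAux_succ_of_le_half (m : ℕ) (ht : t ≤ 1 / 2) :
    phiAux (n + 1) m t =
      if m % 2 = 0 then (phiAux n (m + 1) (2 * t) + (8 * (m : ℚ) + 6) * t) / 8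
      else (phiAux n (m - 1) (2 * t) + ((2 * t) - (2 * t) ^ 2) + (8 * (m : ℚ) + 6) * t) / 8 :=
  if_pos ht

lemma phiAux_succ_of_half_lt (m : ℕ) (ht : 1 / 2 < t) :
    phiAux (n + 1) m t =
      if m = 0 then (phiAux n 0 (2 * t - 1) + 6 * (1 - t)) / 8
      else if m % 2 = 0 then
        (phiAux n (m - 1) (2 * t - 1) + ((2 * t - 1) - (2 * t - 1) ^ 2)
          + (8 * (m : ℚ) + 6) * (1 - t)) / 8
      else (phiAux n (m + 1) (2 * t - 1) + (8 * (m : ℚ) + 6) * (1 - t)) / 8 :=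
  if_neg (not_le.mpr ht)

lemma phiAux_zero (n m : ℕ) : phiAux n m 0 = 0 := by
  induction n generalizing m <;> simp_all [phiAux]

lemma phiAux_one (n m : ℕ) : phiAux n m 1 = 0 := by
  induction n generalizing m <;> norm_num [phiAux, *]

/-- At `t = 1/2` both branches of the recursion for `phiAux` agree. -/
lemma phiAux_succ_of_half_le (m : ℕ) (ht : 1 / 2 ≤ t) :
    phiAux (n + 1) m t =
      if m = 0 then (phiAux n 0 (2 * t - 1) + 6 * (1 - t)) / 8
      else if m % 2 = 0 then
        (phiAux n (m - 1) (2 * t - 1) + ((2 * t - 1) - (2 * t - 1) ^ 2)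
          + (8 * (m : ℚ) + 6) * (1 - t)) / 8
      else (phiAux n (m + 1) (2 * t - 1) + (8 * (m : ℚ) + 6) * (1 - t)) / 8 := by
  rcases ht.lt_or_eq with ht | rfl
  · exact phiAux_succ_of_half_lt m ht
  · rw [phiAux_succ_of_le_half m le_rfl]
    split_ifs <;> subst_vars <;> norm_num [phiAux_zero, phiAux_one]

lemma phiAux_succ_of_mem (h : t ∈ dyadicLevel n) (m : ℕ) :
    phiAux (n + 1) m t = phiAux n m t := by
  revert m
  refine dyadicLevel_induction ?_ ?_ ?_ ?_ h
  · simp [phiAux]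
  · norm_num [phiAux]
  · intro n t ht ih m
    rw [phiAux_succ_of_le_half m ht, phiAux_succ_of_le_half m ht, ih, ih]
  · intro n t ht ih _ m
    rw [phiAux_succ_of_half_lt m ht, phiAux_succ_of_half_lt m ht, ih, ih, ih]

lemma evI_phiM (h : t ∈ dyadicLevel n) (m : ℕ) : evI (phiM m) t = phiAux n m t :=
  (evI_of_mem (mem_dyadicI_iff.mpr ⟨n, h⟩)).trans
    (apply_padicValNat_den_eq (F := fun n t => phiAux n m t)
      (fun h => phiAux_succ_of_mem h m) h)

lemma phiM_apply {s : dyadicI} (hs : s.1 ∈ dyadicLevel n) (m : ℕ) :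
    phiM m s = phiAux n m s := by
  rw [← evI_coe (phiM m) s, evI_phiM hs]

lemma evI_phiM_zero (m : ℕ) : evI (phiM m) 0 = 0 := evI_phiM (zero_mem_dyadicLevel 0) m

lemma evI_phiM_one (m : ℕ) : evI (phiM m) 1 = 0 := evI_phiM (one_mem_dyadicLevel 0) m

lemma T0_phiM_of_even (hm : Even m) :
    T0 (phiM m) = (8 : ℚ)⁻¹ • (phiM (m + 1) + (4 * (m : ℚ) + 3) • tId) := by
  funext s
  obtain ⟨n, hs⟩ := mem_dyadicI_iff.mp s.2
  rw [T0, evI_phiM (div_two_mem_dyadicLevel hs), phiAux_succ_of_le_half _ (by linarith [s.2.2.1]),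
    if_pos (Nat.even_iff.mp hm), mul_div_cancel₀ _ two_ne_zero, ← phiM_apply hs]
  simp only [Pi.smul_apply, Pi.add_apply, tId, smul_eq_mul]
  ring

lemma T0_phiM_of_odd (hm : Odd m) :
    T0 (phiM m) = (8 : ℚ)⁻¹ • (phiM (m - 1) + epsX + (4 * (m : ℚ) + 3) • tId) := by
  funext s
  obtain ⟨n, hs⟩ := mem_dyadicI_iff.mp s.2
  rw [T0, evI_phiM (div_two_mem_dyadicLevel hs), phiAux_succ_of_le_half _ (by linarith [s.2.2.1]),
    if_neg (Nat.not_even_iff_odd.mpr hm ∘ Nat.even_iff.mpr), mul_div_cancel₀ _ two_ne_zero,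
    ← phiM_apply hs]
  simp only [Pi.smul_apply, Pi.add_apply, epsX, tId, smul_eq_mul]
  ring

lemma T1_phiM_zero : T1 (phiM 0) = (8 : ℚ)⁻¹ • (phiM 0 + (3 : ℚ) • (oneX - tId)) := by
  funext s
  obtain ⟨n, hs⟩ := mem_dyadicI_iff.mp s.2
  rw [T1, evI_phiM (one_add_div_two_mem_dyadicLevel hs),
    phiAux_succ_of_half_le _ (by linarith [s.2.1]), if_pos rfl, mul_div_cancel₀ _ two_ne_zero,
    add_sub_cancel_left, ← phiM_apply hs]
  simp only [Pi.smul_apply, Pi.add_apply, Pi.sub_apply, oneX, tId, smul_eq_mul]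
  ring

lemma T1_phiM_of_even (hm : Even m) (hm₀ : m ≠ 0) :
    T1 (phiM m) = (8 : ℚ)⁻¹ • (phiM (m - 1) + epsX + (4 * (m : ℚ) + 3) • (oneX - tId)) := by
  funext s
  obtain ⟨n, hs⟩ := mem_dyadicI_iff.mp s.2
  rw [T1, evI_phiM (one_add_div_two_mem_dyadicLevel hs),
    phiAux_succ_of_half_le _ (by linarith [s.2.1]), if_neg hm₀, if_pos (Nat.even_iff.mp hm),
    mul_div_cancel₀ _ two_ne_zero, add_sub_cancel_left, ← phiM_apply hs]
  simp only [Pi.smul_apply, Pi.add_apply, Pi.sub_apply, epsX, oneX, tId, smul_eq_mul]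
  ring

lemma T1_phiM_of_odd (hm : Odd m) :
    T1 (phiM m) = (8 : ℚ)⁻¹ • (phiM (m + 1) + (4 * (m : ℚ) + 3) • (oneX - tId)) := by
  funext s
  obtain ⟨n, hs⟩ := mem_dyadicI_iff.mp s.2
  rw [T1, evI_phiM (one_add_div_two_mem_dyadicLevel hs),
    phiAux_succ_of_half_le _ (by linarith [s.2.1]), if_neg (by rintro rfl; simp at hm),
    if_neg (Nat.not_even_iff_odd.mpr hm ∘ Nat.even_iff.mpr), mul_div_cancel₀ _ two_ne_zero,
    add_sub_cancel_left, ← phiM_apply hs]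
  simp only [Pi.smul_apply, Pi.add_apply, Pi.sub_apply, oneX, tId, smul_eq_mul]
  ring

lemma evI_phiM_half (m : ℕ) : evI (phiM m) (1 / 2) = (4 * m + 3) / 8 := by
  rw [evI_phiM (n := 1) ⟨by norm_num, by norm_num, 1, by norm_num⟩,
    phiAux_succ_of_le_half m le_rfl]
  split_ifs <;> norm_num [phiAux] <;> ring

lemma T0_phiM_zero_add_T1_phiM_zero :
    T0 (phiM 0) + T1 (phiM 0) = (8 : ℚ)⁻¹ • (phiM 0 + phiM 1 + (3 : ℚ) • oneX) := by
  rw [T0_phiM_of_even Even.zero, T1_phiM_zero]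
  module

lemma T0_phiM_succ_add_T1_phiM_succ (m : ℕ) :
    T0 (phiM (m + 1)) + T1 (phiM (m + 1)) =
      (8 : ℚ)⁻¹ • (phiM m + phiM (m + 2) + epsX + (4 * (m : ℚ) + 7) • oneX) := by
  rcases Nat.even_or_odd (m + 1) with hm | hm
  · rw [T0_phiM_of_even hm, T1_phiM_of_even hm m.succ_ne_zero, Nat.add_sub_cancel]
    push_cast
    module
  · rw [T0_phiM_of_odd hm, T1_phiM_of_odd hm, Nat.add_sub_cancel]
    push_cast
    module

end Phi

lemma T0_hash_epsX (β : X) :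
    T0 (hash epsX β) = (4 : ℚ)⁻¹ • (hash epsX (T0 β + T1 β)
      + (2 * evI β (1 / 2) - evI β 1 - evI β 0) • tId) := by
  rw [T0_hash, T0_epsX, T1_epsX, hash_add_right]
  simp only [hash_smul_left, hash_add_left, hash_sub_left, hash_oneX_left, hash_tId_left,
    evI_T0_zero, evI_T0_one, evI_T1_zero, evI_T1_one]
  module

lemma smul_T0_hash_epsX_phiM_zero :
    (32 : ℚ) • T0 (hash epsX (phiM 0)) =
      hash epsX (phiM 0) + hash epsX (phiM 1) + (6 : ℚ) • tId := by
  rw [T0_hash_epsX, T0_phiM_zero_add_T1_phiM_zero, evI_phiM_half, evI_phiM_zero, evI_phiM_one]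
  simp only [hash_smul_right, hash_add_right, hash_oneX_right]
  module

lemma smul_T0_hash_epsX_phiM_succ (m : ℕ) :
    (32 : ℚ) • T0 (hash epsX (phiM (m + 1))) =
      hash epsX (phiM m) + hash epsX (phiM (m + 2)) + (8 * (m : ℚ) + 14) • tId
        + hash epsX epsX := by
  rw [T0_hash_epsX, T0_phiM_succ_add_T1_phiM_succ, evI_phiM_half, evI_phiM_zero, evI_phiM_one]
  simp only [hash_smul_right, hash_add_right, hash_oneX_right]
  push_cast
  module

lemma smul_T0_hash_epsX_epsX :
    (32 : ℚ) • T0 (hash epsX epsX) = (4 : ℚ) • hash epsX epsX + (4 : ℚ) • tId := by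
  rw [T0_hash_epsX, T0_epsX, T1_epsX, evI_epsX half_mem_dyadicI, evI_epsX_zero, evI_epsX_one]
  simp only [hash_smul_right, hash_add_right, hash_sub_right, hash_oneX_right, hash_tId_right]
  module

end DyadicHash

open DyadicHash

/-- Lemma 2.5: with `T = 32T₀` and `E_k = ε # φ_{k−1}`:
(1) `T(E₁) = E₁ + E₂ + 6t`; (2) for `k > 1`,
`T(E_k) = E_{k−1} + E_{k+1} + (8k−2)t + (ε # ε)`;
(3) `T(ε # ε) = 4(ε # ε) + 4t` and `T(t) = 16t`. -/
theorem statement10 :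
    (32 : ℚ) • T0 (hash epsX (phiM 0)) =
        hash epsX (phiM 0) + hash epsX (phiM 1) + (6 : ℚ) • tId ∧
    (∀ k : ℕ, 1 < k →
      (32 : ℚ) • T0 (hash epsX (phiM (k - 1))) =
        hash epsX (phiM (k - 2)) + hash epsX (phiM k) + (8 * (k : ℚ) - 2) • tId
          + hash epsX epsX) ∧
    (32 : ℚ) • T0 (hash epsX epsX) = (4 : ℚ) • hash epsX epsX + (4 : ℚ) • tId ∧
    (32 : ℚ) • T0 tId = (16 : ℚ) • tId := by
  refine ⟨smul_T0_hash_epsX_phiM_zero, fun k hk => ?_, smul_T0_hash_epsX_epsX, ?_⟩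
  · obtain ⟨m, rfl⟩ : ∃ m, k = m + 2 := ⟨k - 2, by omega⟩
    rw [Nat.add_sub_cancel, show m + 2 - 1 = m + 1 by omega, smul_T0_hash_epsX_phiM_succ]
    push_cast
    module
  · rw [T0_tId, smul_smul]
    norm_num

end
end

section
/- Let E₁ = ε # φ₀ and let S be the power series Σ_{n≥0} E₁(2^{−n})(32w)ⁿ ∈ ℚ[[w]]. Then (1−16w)(1−4w)(1−2w)²·S = 4w(1−2w)² + (2w−12w²)·√(1−4w²), where √(1−4w²) denotes the unique power series in ℚ[[w]] with constant term 1 whose square is 1−4w². -/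
open scoped BigOperators

noncomputable section

attribute [local instance] Classical.propDecidable

/-!
Write `eₘ(n) = 32ⁿ (ε # φₘ)(2⁻ⁿ)`. Since `(α # β)(2⁻ⁿ⁻¹) = (T₀α # T₀β)(2⁻ⁿ) + (T₁α # T₁β)(2⁻ⁿ)`,
`#` is bilinear and `1 # β = 0`, and since `T₀`, `T₁` map `ε`, `t` and `φₘ` to combinations
of `ε`, `t`, `1` and `φₘ₋₁`, `φₘ₊₁`, one gets the values of `t # t`, `t # ε`, `ε # ε`, `t # φₘ`
at `2⁻ⁿ` and the recursions `e₀(n+1) = e₀(n) + e₁(n) + 6·16ⁿ` and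
`eₘ₊₁(n+1) = eₘ(n) + eₘ₊₂(n) + (16ⁿ − 4ⁿ)/3 + (8m + 14)·16ⁿ`, with `eₘ(0) = 0`.
For the generating functions `Fₘ` this is a system `Fₘ₊₁ = w (Fₘ + Fₘ₊₂) + …` which determines
them coefficient by coefficient, so it suffices to exhibit one solution. It is built from
geometric series and the series `L` with `w L² + w = L`, for which `√(1 − 4w²) = 1 − 2wL`.
-/

namespace dyadicI

lemma exists_eq_div_two_pow {t : ℚ} (ht : t ∈ dyadicI) : ∃ i n : ℕ, i ≤ 2 ^ n ∧ t = i / 2 ^ n := by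
  obtain ⟨h0, h1, i, n, rfl⟩ := ht
  refine ⟨i, n, ?_, rfl⟩
  rw [div_le_one (by positivity)] at h1
  exact_mod_cast h1

lemma div_two_mem {t : ℚ} (ht : t ∈ dyadicI) : t / 2 ∈ dyadicI := by
  obtain ⟨i, n, hi, rfl⟩ := exists_eq_div_two_pow ht
  convert dyadicI_mem (n := n + 1) (hi.trans (Nat.pow_le_pow_right two_pos n.le_succ)) using 1
  ring

lemma one_add_div_two_mem {t : ℚ} (ht : t ∈ dyadicI) : (1 + t) / 2 ∈ dyadicI := by
  obtain ⟨i, n, hi, rfl⟩ := exists_eq_div_two_pow ht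
  convert dyadicI_mem (i := 2 ^ n + i) (n := n + 1) (by omega) using 1
  push_cast
  field_simp
  ring

lemma den_eq_two_pow {t : ℚ} (ht : t ∈ dyadicI) : t.den = 2 ^ padicValNat 2 t.den := by
  obtain ⟨i, n, -, rfl⟩ := exists_eq_div_two_pow ht
  have hdvd : ((i : ℚ) / 2 ^ n).den ∣ 2 ^ n := by
    simpa [div_eq_mul_inv] using Rat.mul_den_dvd (i : ℚ) ((2 ^ n : ℕ) : ℚ)⁻¹
  obtain ⟨k, -, hk⟩ := (Nat.dvd_prime_pow Nat.prime_two).mp hdvd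
  rw [hk, padicValNat.prime_pow]

lemma exists_eq_div_two_pow_of_le {t : ℚ} (ht : t ∈ dyadicI) {n : ℕ}
    (hn : padicValNat 2 t.den ≤ n) : ∃ i : ℕ, i ≤ 2 ^ n ∧ t = i / 2 ^ n := by
  obtain ⟨d, hd⟩ := Nat.exists_eq_add_of_le hn
  have hden : (t.den : ℚ) = 2 ^ padicValNat 2 t.den := by exact_mod_cast den_eq_two_pow ht
  have hnum_cast : ((t.num.toNat : ℤ) : ℚ) = t.num := by
    rw [Int.toNat_of_nonneg (Rat.num_nonneg.mpr ht.1)]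
  have hnum : t = t.num.toNat * 2 ^ d / 2 ^ n := by
    nth_rewrite 1 [← Rat.num_div_den t]
    rw [hden, ← hnum_cast, hd, pow_add]
    push_cast
    field_simp
  refine ⟨t.num.toNat * 2 ^ d, ?_, by exact_mod_cast hnum⟩
  have : ((t.num.toNat * 2 ^ d : ℕ) : ℚ) ≤ 2 ^ n := by
    rw [← div_le_one (by positivity)]
    push_cast
    rw [← hnum]
    exact ht.2.1
  exact_mod_cast this

end dyadicI

lemma evI_add (α β : X) (t : ℚ) : evI (α + β) t = evI α t + evI β t := by
  unfold evI; split_ifs <;> simp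

lemma evI_smul (c : ℚ) (α : X) (t : ℚ) : evI (c • α) t = c * evI α t := by
  unfold evI; split_ifs <;> simp

lemma evI_of_mem (α : X) {t : ℚ} (ht : t ∈ dyadicI) : evI α t = α ⟨t, ht⟩ := dif_pos ht

lemma T0_add (α β : X) : T0 (α + β) = T0 α + T0 β := funext fun _ => evI_add ..

lemma T1_add (α β : X) : T1 (α + β) = T1 α + T1 β := funext fun _ => evI_add ..

lemma T0_smul (c : ℚ) (α : X) : T0 (c • α) = c • T0 α := funext fun _ => evI_smul ..

lemma T1_smul (c : ℚ) (α : X) : T1 (c • α) = c • T1 α := funext fun _ => evI_smul ..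

lemma T0_oneX : T0 oneX = oneX := by
  funext t; rw [T0, evI_of_mem _ (dyadicI.div_two_mem t.2)]; rfl

lemma T1_oneX : T1 oneX = oneX := by
  funext t; rw [T1, evI_of_mem _ (dyadicI.one_add_div_two_mem t.2)]; rfl

def hashInvPow (n : ℕ) (α β : X) : ℚ := hashAux n α β (1 / 2 ^ n)

lemma hash_invPow (n : ℕ) (α β : X) : hash α β (invPow n) = hashInvPow n α β := by
  have hden : ((1 : ℚ) / 2 ^ n).den = 2 ^ n := by simp
  show hashAux (padicValNat 2 ((1 : ℚ) / 2 ^ n).den) α β (1 / 2 ^ n) = _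
  rw [hden, padicValNat.prime_pow, hashInvPow]

lemma hashInvPow_zero (α β : X) :
    hashInvPow 0 α β = (α ⟨1, one_mem_dyadicI⟩ - α ⟨0, zero_mem_dyadicI⟩)
      * (β ⟨1, one_mem_dyadicI⟩ - β ⟨0, zero_mem_dyadicI⟩) := by
  simp [hashInvPow, hashAux, evI_of_mem _ zero_mem_dyadicI, evI_of_mem _ one_mem_dyadicI]

lemma hashInvPow_succ (n : ℕ) (α β : X) :
    hashInvPow (n + 1) α β = hashInvPow n (T0 α) (T0 β) + hashInvPow n (T1 α) (T1 β) := by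
  have hle : (1 : ℚ) / 2 ^ (n + 1) ≤ 1 / 2 :=
    one_div_le_one_div_of_le two_pos (le_self_pow₀ one_le_two n.succ_ne_zero)
  have htwice : 2 * ((1 : ℚ) / 2 ^ (n + 1)) = 1 / 2 ^ n := by rw [pow_succ]; field_simp
  simp only [hashInvPow, hashAux, if_pos hle, htwice]

lemma hashInvPow_comm (n : ℕ) (α β : X) : hashInvPow n α β = hashInvPow n β α := by
  induction n generalizing α β with
  | zero => rw [hashInvPow_zero, hashInvPow_zero, mul_comm]
  | succ n ih => rw [hashInvPow_succ, hashInvPow_succ, ih (T0 α), ih (T1 α)]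

lemma hashInvPow_add_left (n : ℕ) (α β γ : X) :
    hashInvPow n (α + β) γ = hashInvPow n α γ + hashInvPow n β γ := by
  induction n generalizing α β γ with
  | zero => simp only [hashInvPow_zero, Pi.add_apply]; ring
  | succ n ih => simp only [hashInvPow_succ, T0_add, T1_add, ih]; ring

lemma hashInvPow_smul_left (n : ℕ) (c : ℚ) (α β : X) :
    hashInvPow n (c • α) β = c * hashInvPow n α β := by
  induction n generalizing α β with
  | zero => simp only [hashInvPow_zero, Pi.smul_apply, smul_eq_mul]; ring
  | succ n ih => simp only [hashInvPow_succ, T0_smul, T1_smul, ih]; ring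

lemma hashInvPow_oneX_left (n : ℕ) (β : X) : hashInvPow n oneX β = 0 := by
  induction n generalizing β with
  | zero => simp [hashInvPow_zero, oneX]
  | succ n ih => simp only [hashInvPow_succ, T0_oneX, T1_oneX, ih, add_zero]

lemma hashInvPow_add_right (n : ℕ) (α β γ : X) :
    hashInvPow n α (β + γ) = hashInvPow n α β + hashInvPow n α γ := by
  simp only [hashInvPow_comm n α, hashInvPow_add_left]

lemma hashInvPow_smul_right (n : ℕ) (c : ℚ) (α β : X) :
    hashInvPow n α (c • β) = c * hashInvPow n α β := by
  rw [hashInvPow_comm, hashInvPow_smul_left, hashInvPow_comm]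

lemma hashInvPow_oneX_right (n : ℕ) (α : X) : hashInvPow n α oneX = 0 := by
  rw [hashInvPow_comm, hashInvPow_oneX_left]

lemma phiAux_apply_zero (n m : ℕ) : phiAux n m 0 = 0 := by
  induction n generalizing m with
  | zero => rfl
  | succ n ih => simp [phiAux, ih]

lemma phiAux_apply_one (n m : ℕ) : phiAux n m 1 = 0 := by
  induction n generalizing m with
  | zero => rfl
  | succ n ih => norm_num [phiAux, ih]

lemma phiAux_succ_div_two (n m : ℕ) {x : ℚ} (hx : x ≤ 1) :
    phiAux (n + 1) m (x / 2) =
      if m % 2 = 0 then (phiAux n (m + 1) x + (8 * (m : ℚ) + 6) * (x / 2)) / 8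
      else (phiAux n (m - 1) x + (x - x ^ 2) + (8 * (m : ℚ) + 6) * (x / 2)) / 8 := by
  rw [phiAux, if_pos (by linarith), mul_div_cancel₀ x two_ne_zero]

/-- At `x = 0` the point `(1 + x)/2 = 1/2` lies in the other branch of the recursion; both branches
agree there because `φ_m` vanishes at `0` and `1`. -/
lemma phiAux_succ_one_add_div_two (n m : ℕ) {x : ℚ} (hx : 0 ≤ x) :
    phiAux (n + 1) m ((1 + x) / 2) =
      if m = 0 then (phiAux n 0 x + 6 * (1 - (1 + x) / 2)) / 8
      else if m % 2 = 0 then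
        (phiAux n (m - 1) x + (x - x ^ 2) + (8 * (m : ℚ) + 6) * (1 - (1 + x) / 2)) / 8
      else (phiAux n (m + 1) x + (8 * (m : ℚ) + 6) * (1 - (1 + x) / 2)) / 8 := by
  rcases hx.eq_or_lt with rfl | hpos
  · rcases eq_or_ne m 0 with rfl | hm0
    · norm_num [phiAux, phiAux_apply_zero, phiAux_apply_one]
    · norm_num [phiAux, phiAux_apply_zero, phiAux_apply_one, hm0]
  · rw [phiAux, if_neg (by linarith), show 2 * ((1 + x) / 2) - 1 = x by ring]

lemma phiAux_succ_of_eq_div {n i : ℕ} (hi : i ≤ 2 ^ n) (m : ℕ) :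
    phiAux (n + 1) m (i / 2 ^ n) = phiAux n m (i / 2 ^ n) := by
  induction n generalizing i m with
  | zero =>
    interval_cases i
    · simp [phiAux_apply_zero]
    · simp [phiAux_apply_one]
  | succ n ih =>
    rcases le_or_gt i (2 ^ n) with hle | hgt
    · have hx : (i : ℚ) / 2 ^ (n + 1) = i / 2 ^ n / 2 := by rw [pow_succ, div_div]
      have hx1 : (i : ℚ) / 2 ^ n ≤ 1 := by
        rw [div_le_one (by positivity)]; exact_mod_cast hle
      simp only [hx, phiAux_succ_div_two _ _ hx1, ih hle]
    · have hx : (i : ℚ) / 2 ^ (n + 1) = (1 + ((i - 2 ^ n : ℕ) : ℚ) / 2 ^ n) / 2 := by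
        rw [Nat.cast_sub hgt.le, pow_succ]; field_simp; push_cast; ring
      have hx0 : (0 : ℚ) ≤ ((i - 2 ^ n : ℕ) : ℚ) / 2 ^ n := by positivity
      have hle : i - 2 ^ n ≤ 2 ^ n := by rw [pow_succ] at hi; omega
      simp only [hx, phiAux_succ_one_add_div_two _ _ hx0, ih hle]

lemma phiM_apply_of_le (m : ℕ) (x : dyadicI) {n : ℕ} (hn : padicValNat 2 x.1.den ≤ n) :
    phiM m x = phiAux n m x := by
  induction n, hn using Nat.le_induction with
  | base => rfl
  | succ n hn ih =>
    obtain ⟨i, hi, hx⟩ := dyadicI.exists_eq_div_two_pow_of_le x.2 hn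
    rw [ih, hx, phiAux_succ_of_eq_div hi]

lemma evI_phiM_div_two (m : ℕ) (x : dyadicI) :
    evI (phiM m) (x / 2) =
      if m % 2 = 0 then (phiM (m + 1) x + (8 * (m : ℚ) + 6) * (x / 2)) / 8
      else (phiM (m - 1) x + (x - x ^ 2) + (8 * (m : ℚ) + 6) * (x / 2)) / 8 := by
  -- any level above the denominators of both `x` and `x / 2` computes both sides
  set N := padicValNat 2 x.1.den + padicValNat 2 (x.1 / 2).den
  rw [evI_of_mem _ (dyadicI.div_two_mem x.2),
    phiM_apply_of_le m ⟨_, dyadicI.div_two_mem x.2⟩ (n := N + 1) (by dsimp only; omega),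
    phiAux_succ_div_two _ _ x.2.2.1, phiM_apply_of_le _ x (n := N) (by omega),
    phiM_apply_of_le _ x (n := N) (by omega)]

lemma evI_phiM_one_add_div_two (m : ℕ) (x : dyadicI) :
    evI (phiM m) ((1 + x) / 2) =
      if m = 0 then (phiM 0 x + 6 * (1 - (1 + x) / 2)) / 8
      else if m % 2 = 0 then
        (phiM (m - 1) x + (x - x ^ 2) + (8 * (m : ℚ) + 6) * (1 - (1 + x) / 2)) / 8
      else (phiM (m + 1) x + (8 * (m : ℚ) + 6) * (1 - (1 + x) / 2)) / 8 := by
  set N := padicValNat 2 x.1.den + padicValNat 2 ((1 + x.1) / 2).den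
  rw [evI_of_mem _ (dyadicI.one_add_div_two_mem x.2),
    phiM_apply_of_le m ⟨_, dyadicI.one_add_div_two_mem x.2⟩ (n := N + 1) (by dsimp only; omega),
    phiAux_succ_one_add_div_two _ _ x.2.1, phiM_apply_of_le _ x (n := N) (by omega),
    phiM_apply_of_le _ x (n := N) (by omega), phiM_apply_of_le _ x (n := N) (by omega)]

lemma T0_epsX : T0 epsX = (1 / 4 : ℚ) • epsX + (1 / 4 : ℚ) • tId := by
  funext x
  rw [T0, evI_of_mem _ (dyadicI.div_two_mem x.2)]
  simp only [epsX, tId, Pi.add_apply, Pi.smul_apply, smul_eq_mul]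
  ring

lemma T1_epsX : T1 epsX = (1 / 4 : ℚ) • epsX + (1 / 4 : ℚ) • oneX + (-1 / 4 : ℚ) • tId := by
  funext x
  rw [T1, evI_of_mem _ (dyadicI.one_add_div_two_mem x.2)]
  simp only [epsX, tId, oneX, Pi.add_apply, Pi.smul_apply, smul_eq_mul]
  ring

lemma T0_tId : T0 tId = (1 / 2 : ℚ) • tId := by
  funext x
  rw [T0, evI_of_mem _ (dyadicI.div_two_mem x.2)]
  simp only [tId, Pi.smul_apply, smul_eq_mul]
  ring

lemma T1_tId : T1 tId = (1 / 2 : ℚ) • oneX + (1 / 2 : ℚ) • tId := by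
  funext x
  rw [T1, evI_of_mem _ (dyadicI.one_add_div_two_mem x.2)]
  simp only [tId, oneX, Pi.add_apply, Pi.smul_apply, smul_eq_mul]
  ring

lemma T0_phiM_of_even {m : ℕ} (hm : Even m) :
    T0 (phiM m) = (1 / 8 : ℚ) • phiM (m + 1) + ((4 * m + 3) / 8 : ℚ) • tId := by
  funext x
  rw [T0, evI_phiM_div_two, if_pos (Nat.even_iff.mp hm)]
  simp only [tId, Pi.add_apply, Pi.smul_apply, smul_eq_mul]
  ring

lemma T0_phiM_succ_of_even {m : ℕ} (hm : Even m) :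
    T0 (phiM (m + 1)) =
      (1 / 8 : ℚ) • phiM m + (1 / 8 : ℚ) • epsX + ((4 * m + 7) / 8 : ℚ) • tId := by
  funext x
  rw [T0, evI_phiM_div_two, if_neg (by have := Nat.even_iff.mp hm; omega), Nat.add_sub_cancel]
  simp only [tId, epsX, Pi.add_apply, Pi.smul_apply, smul_eq_mul]
  push_cast
  ring

lemma T1_phiM_zero :
    T1 (phiM 0) = (1 / 8 : ℚ) • phiM 0 + (3 / 8 : ℚ) • oneX + (-3 / 8 : ℚ) • tId := by
  funext x
  rw [T1, evI_phiM_one_add_div_two, if_pos rfl]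
  simp only [tId, oneX, Pi.add_apply, Pi.smul_apply, smul_eq_mul]
  ring

lemma T1_phiM_succ_of_odd {m : ℕ} (hm : Odd m) :
    T1 (phiM (m + 1)) = (1 / 8 : ℚ) • phiM m + (1 / 8 : ℚ) • epsX
      + ((4 * m + 7) / 8 : ℚ) • oneX + (-(4 * m + 7) / 8 : ℚ) • tId := by
  funext x
  rw [T1, evI_phiM_one_add_div_two, if_neg m.succ_ne_zero,
    if_pos (Nat.even_iff.mp hm.add_one), Nat.add_sub_cancel]
  simp only [tId, oneX, epsX, Pi.add_apply, Pi.smul_apply, smul_eq_mul]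
  push_cast
  ring

lemma T1_phiM_of_odd {m : ℕ} (hm : Odd m) :
    T1 (phiM m) = (1 / 8 : ℚ) • phiM (m + 1)
      + ((4 * m + 3) / 8 : ℚ) • oneX + (-(4 * m + 3) / 8 : ℚ) • tId := by
  funext x
  rw [T1, evI_phiM_one_add_div_two, if_neg (by rintro rfl; simp at hm),
    if_neg (by have := Nat.odd_iff.mp hm; omega)]
  simp only [tId, oneX, Pi.add_apply, Pi.smul_apply, smul_eq_mul]
  ring

lemma hashInvPow_tId_tId (n : ℕ) : hashInvPow n tId tId = (1 / 2) ^ n := by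
  induction n with
  | zero => simp [hashInvPow_zero, tId]
  | succ n ih =>
    rw [hashInvPow_succ, T0_tId, T1_tId]
    simp only [hashInvPow_add_left, hashInvPow_add_right, hashInvPow_smul_left,
      hashInvPow_smul_right, hashInvPow_oneX_left, hashInvPow_oneX_right, ih]
    ring

lemma hashInvPow_tId_epsX (n : ℕ) : hashInvPow n tId epsX = 0 := by
  induction n with
  | zero => simp [hashInvPow_zero, epsX]
  | succ n ih =>
    rw [hashInvPow_succ, T0_tId, T1_tId, T0_epsX, T1_epsX]
    simp only [hashInvPow_add_left, hashInvPow_add_right, hashInvPow_smul_left,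
      hashInvPow_smul_right, hashInvPow_oneX_left, hashInvPow_oneX_right, ih, hashInvPow_tId_tId]
    ring

lemma hashInvPow_epsX_epsX (n : ℕ) : hashInvPow n epsX epsX = ((1 / 2) ^ n - (1 / 8) ^ n) / 3 := by
  induction n with
  | zero => simp [hashInvPow_zero, epsX]
  | succ n ih =>
    rw [hashInvPow_succ, T0_epsX, T1_epsX]
    simp only [hashInvPow_add_left, hashInvPow_add_right, hashInvPow_smul_left,
      hashInvPow_smul_right, hashInvPow_oneX_left, hashInvPow_oneX_right, ih, hashInvPow_tId_tId,
      hashInvPow_tId_epsX, hashInvPow_comm n epsX tId]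
    ring

lemma hashInvPow_zero_phiM (α : X) (m : ℕ) : hashInvPow 0 α (phiM m) = 0 := by
  simp [hashInvPow_zero, phiM, phiAux_apply_zero, phiAux_apply_one]

lemma hashInvPow_tId_phiM (n m : ℕ) : hashInvPow n tId (phiM m) = 0 := by
  induction n generalizing m with
  | zero => exact hashInvPow_zero_phiM tId m
  | succ n ih =>
    rw [hashInvPow_succ, T0_tId, T1_tId]
    obtain _ | k := m <;>
    [rw [T0_phiM_of_even Even.zero, T1_phiM_zero];
      rcases Nat.even_or_odd k with hk | hk <;>
      [rw [T0_phiM_succ_of_even hk, T1_phiM_of_odd hk.add_one];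
        rw [T0_phiM_of_even hk.add_one, T1_phiM_succ_of_odd hk]]] <;>
    · simp only [hashInvPow_add_left, hashInvPow_add_right, hashInvPow_smul_left,
        hashInvPow_smul_right, hashInvPow_oneX_left, hashInvPow_oneX_right, ih,
        hashInvPow_tId_tId, hashInvPow_tId_epsX]
      push_cast
      ring

lemma hashInvPow_succ_epsX_phiM_zero (n : ℕ) :
    hashInvPow (n + 1) epsX (phiM 0) =
      (hashInvPow n epsX (phiM 0) + hashInvPow n epsX (phiM 1)) / 32 + 6 / 32 * (1 / 2) ^ n := by
  rw [hashInvPow_succ, T0_epsX, T1_epsX, T0_phiM_of_even Even.zero, T1_phiM_zero]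
  simp only [hashInvPow_add_left, hashInvPow_add_right, hashInvPow_smul_left,
    hashInvPow_smul_right, hashInvPow_oneX_left, hashInvPow_oneX_right, hashInvPow_tId_tId,
    hashInvPow_tId_epsX, hashInvPow_tId_phiM, hashInvPow_comm n epsX tId]
  ring

lemma hashInvPow_succ_epsX_phiM_succ (n k : ℕ) :
    hashInvPow (n + 1) epsX (phiM (k + 1)) =
      (hashInvPow n epsX (phiM k) + hashInvPow n epsX (phiM (k + 2))) / 32
        + ((1 / 2) ^ n - (1 / 8) ^ n) / 96 + (8 * k + 14) / 32 * (1 / 2) ^ n := by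
  rw [hashInvPow_succ, T0_epsX, T1_epsX]
  rcases Nat.even_or_odd k with hk | hk <;>
  [rw [T0_phiM_succ_of_even hk, T1_phiM_of_odd hk.add_one];
    rw [T0_phiM_of_even hk.add_one, T1_phiM_succ_of_odd hk]] <;>
  · simp only [hashInvPow_add_left, hashInvPow_add_right, hashInvPow_smul_left,
      hashInvPow_smul_right, hashInvPow_oneX_left, hashInvPow_oneX_right, hashInvPow_tId_tId,
      hashInvPow_tId_epsX, hashInvPow_epsX_epsX, hashInvPow_tId_phiM, hashInvPow_comm n epsX tId]
    push_cast
    ring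

namespace PowerSeries

variable {R : Type*}

def geom [Semiring R] (c : R) : R⟦X⟧ := mk fun n => c ^ n

lemma one_sub_C_mul_X_mul_geom [Ring R] (c : R) : (1 - C c * X) * geom c = 1 := by
  ext n
  rcases n with _ | n
  · simp [geom]
  · simp [geom, sub_mul, mul_assoc, coeff_succ_X_mul, pow_succ']

lemma one_sub_ofNat_mul_X_mul_geom [Ring R] (n : ℕ) [n.AtLeastTwo] :
    (1 - ofNat(n) * X) * geom (ofNat(n) : R) = 1 := by
  rw [← map_ofNat C]
  exact one_sub_C_mul_X_mul_geom _

lemma geom_sub_geom [CommRing R] (a b : R) : geom a - geom b = C (a - b) * X * geom a * geom b := by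
  rw [map_sub]
  linear_combination geom b * one_sub_C_mul_X_mul_geom a - geom a * one_sub_C_mul_X_mul_geom b

lemma eq_zero_of_forall_eq_X_mul_add [Semiring R] {ι : Type*} {D : ι → R⟦X⟧}
    (hD : ∀ i, ∃ j k, D i = X * (D j + D k)) (i : ι) : D i = 0 := by
  suffices h : ∀ n i, coeff n (D i) = 0 from ext fun n => by simpa using h n i
  intro n
  induction n with
  | zero =>
    intro i
    obtain ⟨j, k, hi⟩ := hD i
    rw [hi, coeff_zero_X_mul]
  | succ n ih =>
    intro i
    obtain ⟨j, k, hi⟩ := hD i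
    rw [hi, coeff_succ_X_mul, map_add, ih, ih, add_zero]

lemma exists_eq_one_sub_two_mul_X_mul {K : Type*} [Field K] [NeZero (2 : K)] {s : K⟦X⟧}
    (hs1 : constantCoeff s = 1) (hs2 : s ^ 2 = 1 - 4 * X ^ 2) :
    ∃ L : K⟦X⟧, s = 1 - 2 * X * L ∧ X * L ^ 2 + X = L := by
  obtain ⟨M, hM⟩ : X ∣ 1 - s := X_dvd_iff.mpr (by simp [hs1])
  have htwo : (2 : K⟦X⟧) * C 2⁻¹ = 1 := by
    rw [← map_ofNat C 2, ← map_mul, mul_inv_cancel₀ (NeZero.ne 2), map_one]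
  have h2 : (2 : K⟦X⟧) ≠ 0 := by
    rw [← map_ofNat C 2]; exact (map_ne_zero C).mpr (NeZero.ne 2)
  obtain rfl : s = 1 - X * M := by linear_combination -hM
  refine ⟨C 2⁻¹ * M, by linear_combination X * M * htwo, ?_⟩
  refine mul_left_cancel₀ (mul_ne_zero (mul_ne_zero h2 h2) X_ne_zero) ?_
  linear_combination hs2 + ((2 * C 2⁻¹ + 1) * X ^ 2 * M ^ 2 - 2 * X * M) * htwo

end PowerSeries

section GeneratingFunctions

open PowerSeries renaming X → w
open PowerSeries (C mk geom)

def hashSeries (m : ℕ) : PowerSeries ℚ := mk fun n => 32 ^ n * hashInvPow n epsX (phiM m)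

lemma hashSeries_zero_eq :
    hashSeries 0 = w * (hashSeries 0 + hashSeries 1 + 6 * geom (16 : ℚ)) := by
  ext n
  rcases n with _ | n
  · simp [hashSeries, hashInvPow_zero_phiM]
  · rw [← map_ofNat C 6, PowerSeries.coeff_succ_X_mul]
    simp only [hashSeries, map_add, PowerSeries.coeff_mk, PowerSeries.coeff_C_mul, geom,
      hashInvPow_succ_epsX_phiM_zero]
    have h16 : (32 : ℚ) ^ n * (1 / 2) ^ n = 16 ^ n := by rw [← mul_pow]; norm_num
    linear_combination 6 * h16

lemma hashSeries_succ_eq (k : ℕ) :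
    hashSeries (k + 1) = w * (hashSeries k + hashSeries (k + 2)
      + (1 / 3 : ℚ) • (geom 16 - geom 4) + (8 * k + 14 : ℚ) • geom 16) := by
  ext n
  rcases n with _ | n
  · simp [hashSeries, hashInvPow_zero_phiM]
  · rw [PowerSeries.coeff_succ_X_mul]
    simp only [hashSeries, map_add, map_sub, PowerSeries.coeff_mk, PowerSeries.coeff_smul, geom,
      hashInvPow_succ_epsX_phiM_succ, smul_eq_mul]
    have h16 : (32 : ℚ) ^ n * (1 / 2) ^ n = 16 ^ n := by rw [← mul_pow]; norm_num
    have h4 : (32 : ℚ) ^ n * (1 / 8) ^ n = 4 ^ n := by rw [← mul_pow]; norm_num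
    linear_combination (8 * k + 14 + 1 / 3 : ℚ) * h16 - 1 / 3 * h4

/-- Ansatz `P + m Q + (L - 1) R Lᵐ`: the part affine in `m` absorbs the inhomogeneous terms of the
recursion, `Lᵐ` solves the homogeneous one `Fₘ₊₁ = w (Fₘ + Fₘ₊₂)` because `w (1 + L²) = L`, and the
factor `L - 1` adjusts the boundary equation at `m = 0`. -/
def hashSeriesClosed (L : PowerSeries ℚ) (m : ℕ) : PowerSeries ℚ :=
  geom 2 * (6 * w * geom 16 + 4 * w ^ 2 * geom 16 * geom 4 + 8 * (m : PowerSeries ℚ) * w * geom 16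
    + (L - 1) * L ^ m * (4 * w ^ 2 * geom 16 * geom 4 - 8 * w ^ 2 * geom 16 * geom 2))

section

variable {L : PowerSeries ℚ} (hL : w * L ^ 2 + w = L)
include hL

lemma hashSeriesClosed_zero_eq :
    hashSeriesClosed L 0 =
      w * (hashSeriesClosed L 0 + hashSeriesClosed L 1 + 6 * geom (16 : ℚ)) := by
  have hg := PowerSeries.one_sub_ofNat_mul_X_mul_geom (R := ℚ) 2
  simp only [hashSeriesClosed, Nat.cast_zero, Nat.cast_one]
  linear_combination (6 * w * geom 16 + 8 * w ^ 2 * geom 16 * geom 2) * hg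
    - geom 2 * (4 * w ^ 2 * geom 16 * geom 4 - 8 * w ^ 2 * geom 16 * geom 2) * hL

lemma hashSeriesClosed_succ_eq (k : ℕ) :
    hashSeriesClosed L (k + 1) = w * (hashSeriesClosed L k + hashSeriesClosed L (k + 2)
      + (1 / 3 : ℚ) • (geom 16 - geom 4) + (8 * k + 14 : ℚ) • geom 16) := by
  have hg := PowerSeries.one_sub_ofNat_mul_X_mul_geom (R := ℚ) 2
  have hforce : (1 / 3 : ℚ) • (geom 16 - geom (4 : ℚ)) = 4 * w * geom 16 * geom 4 := by
    rw [PowerSeries.geom_sub_geom, PowerSeries.smul_eq_C_mul, ← mul_assoc, ← mul_assoc,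
      ← mul_assoc, ← map_mul, show (1 / 3 : ℚ) * (16 - 4) = 4 by norm_num, map_ofNat]
  rw [hforce, PowerSeries.smul_eq_C_mul]
  simp only [hashSeriesClosed, map_add, map_mul, map_natCast, map_ofNat]
  push_cast
  linear_combination
    (6 * w * geom 16 + 4 * w ^ 2 * geom 16 * geom 4 + 8 * (k + 1) * w * geom 16) * hg
    - geom 2 * (L - 1) * L ^ k * (4 * w ^ 2 * geom 16 * geom 4 - 8 * w ^ 2 * geom 16 * geom 2) * hL

lemma hashSeries_eq_hashSeriesClosed (m : ℕ) : hashSeries m = hashSeriesClosed L m := by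
  refine sub_eq_zero.mp (PowerSeries.eq_zero_of_forall_eq_X_mul_add
    (D := fun m => hashSeries m - hashSeriesClosed L m) ?_ m)
  rintro (_ | k)
  · exact ⟨0, 1, by linear_combination hashSeries_zero_eq - hashSeriesClosed_zero_eq hL⟩
  · exact ⟨k, k + 2, by linear_combination hashSeries_succ_eq k - hashSeriesClosed_succ_eq hL k⟩

end

lemma mul_hashSeriesClosed_zero (L : PowerSeries ℚ) :
    (1 - 16 * w) * (1 - 4 * w) * (1 - 2 * w) ^ 2 * hashSeriesClosed L 0 =
      4 * w * (1 - 2 * w) ^ 2 + (2 * w - 12 * w ^ 2) * (1 - 2 * w * L) := by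
  have hg := PowerSeries.one_sub_ofNat_mul_X_mul_geom (R := ℚ) 2
  have hu := PowerSeries.one_sub_ofNat_mul_X_mul_geom (R := ℚ) 16
  have hv := PowerSeries.one_sub_ofNat_mul_X_mul_geom (R := ℚ) 4
  set g := geom (2 : ℚ)
  set u := geom (16 : ℚ)
  simp only [hashSeriesClosed, Nat.cast_zero, pow_zero]
  -- cancel each geometric series `geom c` against a factor `1 - c w` of the left-hand side
  linear_combination
    ((1 - 2 * w) * (6 * w * (1 - 4 * w) + 4 * w ^ 2)
      + (L - 1) * (4 * w ^ 2 * (1 - 2 * w) - 8 * w ^ 2 * (1 - 4 * w) * ((1 - 2 * w) * g + 1))) * hg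
    + ((1 - 2 * w) * (6 * w * (1 - 4 * w) + 4 * w ^ 2) * (1 - 2 * w) * g
      + (L - 1) * (4 * w ^ 2 * (1 - 2 * w) ^ 2 * g
        - 8 * w ^ 2 * (1 - 4 * w) * ((1 - 2 * w) * g) ^ 2)) * hu
    + L * 4 * w ^ 2 * (1 - 2 * w) ^ 2 * g * (1 - 16 * w) * u * hv

end GeneratingFunctions

/-- Lemma 2.6: with `E₁ = ε # φ₀` and `S = Σ E₁(2^{−n})(32w)ⁿ`,
`(1−16w)(1−4w)(1−2w)²·S = 4w(1−2w)² + (2w−12w²)·√(1−4w²)`. -/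
theorem statement11 (s : PowerSeries ℚ)
    (hs1 : PowerSeries.constantCoeff s = 1)
    (hs2 : s ^ 2 = 1 - 4 * PowerSeries.X ^ 2) :
    (1 - 16 * PowerSeries.X) * (1 - 4 * PowerSeries.X) * (1 - 2 * PowerSeries.X) ^ 2 *
        (PowerSeries.mk fun n => 32 ^ n * hash epsX (phiM 0) (invPow n)) =
      4 * PowerSeries.X * (1 - 2 * PowerSeries.X) ^ 2 +
        (2 * PowerSeries.X - 12 * PowerSeries.X ^ 2) * s := by
  obtain ⟨L, rfl, hL⟩ := PowerSeries.exists_eq_one_sub_two_mul_X_mul hs1 hs2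
  simp only [hash_invPow]
  rw [← hashSeries, hashSeries_eq_hashSeriesClosed hL, mul_hashSeriesClosed_zero]

end
end

section
/- For every m ≥ 0 and every power of two q ≥ 2: φ_m(1/q) ≤ (4m+4)/(3q) if m is even, and φ_m(1/q) ≤ (4m+3)/(3q) if m is odd. -/
open scoped BigOperators

noncomputable section

attribute [local instance] Classical.propDecidable

/-!
Write `a_n(m) = φ_m(2⁻ⁿ)`. On `[0, 1/2]` the defining recursion only ever reads `φ_{m±1}` at
the doubled point, so `a_{n+1}(m) = (a_n(m ± 1) + …) / 8` with the partner index of opposite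
parity. The bound `(4m + 4 - (m mod 2)) / (3·2ⁿ)` is then preserved by one step of the recursion
(for odd `m` up to the term `-4⁻ⁿ/8 ≤ 0` coming from `ε`), and it holds trivially at `n = 0`,
where `a_0(m) = φ_m(1) = 0`.
-/

lemma phiAux_succ_of_le_half_of_even (n m : ℕ) {t : ℚ} (ht : t ≤ 1 / 2) (hm : m % 2 = 0) :
    phiAux (n + 1) m t = (phiAux n (m + 1) (2 * t) + (8 * (m : ℚ) + 6) * t) / 8 := by
  rw [phiAux, if_pos ht, if_pos hm]

lemma phiAux_succ_of_le_half_of_odd (n m : ℕ) {t : ℚ} (ht : t ≤ 1 / 2) (hm : m % 2 = 1) :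
    phiAux (n + 1) m t =
      (phiAux n (m - 1) (2 * t) + (2 * t - (2 * t) ^ 2) + (8 * (m : ℚ) + 6) * t) / 8 := by
  rw [phiAux, if_pos ht, if_neg (by omega)]

lemma phiAux_one_div_two_pow_le (n m : ℕ) :
    phiAux n m (1 / 2 ^ n) ≤ (4 * m + 4 - (m % 2 : ℕ)) / (3 * 2 ^ n) := by
  induction n generalizing m with
  | zero =>
    simp only [phiAux, pow_zero, mul_one]
    have : (m % 2 : ℕ) ≤ (1 : ℚ) := by exact_mod_cast Nat.le_of_lt_succ (Nat.mod_lt m two_pos)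
    exact div_nonneg (by linarith) (by norm_num)
  | succ n ih =>
    set u : ℚ := 1 / 2 ^ n with hu
    have hu_le : u ≤ 1 := div_le_one_of_le₀ (one_le_pow₀ one_le_two) (by positivity)
    have hhalf : (1 : ℚ) / 2 ^ (n + 1) = u / 2 := by rw [hu, pow_succ]; ring
    have hbound_succ (c : ℚ) : c / (3 * 2 ^ (n + 1)) = c * u / 6 := by rw [hu, pow_succ]; ring
    have hbound (c : ℚ) : c / (3 * 2 ^ n) = c * u / 3 := by rw [hu]; ring
    rw [hhalf, hbound_succ]
    obtain ⟨k, rfl | rfl⟩ := Nat.even_or_odd' m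
    · have hrec := ih (2 * k + 1)
      rw [phiAux_succ_of_le_half_of_even n _ (by linarith) (by omega), mul_div_cancel₀ u two_ne_zero]
      rw [hbound, Nat.add_mod, Nat.mul_mod_right] at hrec
      push_cast [Nat.mul_mod_right] at hrec ⊢
      linarith
    · have hrec := ih (2 * k)
      rw [phiAux_succ_of_le_half_of_odd n _ (by linarith) (by omega), mul_div_cancel₀ u two_ne_zero,
        Nat.add_sub_cancel]
      rw [hbound, Nat.mul_mod_right] at hrec
      push_cast [Nat.add_mod, Nat.mul_mod_right] at hrec ⊢
      linarith [sq_nonneg u]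

lemma evI_phiM_one_div_two_pow (m n : ℕ) :
    evI (phiM m) (1 / 2 ^ n) = phiAux n m (1 / 2 ^ n) := by
  have hden : ((1 : ℚ) / 2 ^ n).den = 2 ^ n := by
    rw [one_div, ← Nat.cast_ofNat, ← Nat.cast_pow, Rat.inv_natCast_den, if_neg (by positivity)]
  have hmem : (1 : ℚ) / 2 ^ n ∈ dyadicI := by
    simpa using dyadicI_mem (i := 1) (n := n) Nat.one_le_two_pow
  rw [evI, dif_pos hmem]
  show phiAux (padicValNat 2 ((1 : ℚ) / 2 ^ n).den) m _ = _
  rw [hden, padicValNat.prime_pow]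

theorem statement12_general (m n : ℕ) :
    (m % 2 = 0 → evI (phiM m) (1 / 2 ^ n) ≤ (4 * (m : ℚ) + 4) / (3 * 2 ^ n)) ∧
    (m % 2 = 1 → evI (phiM m) (1 / 2 ^ n) ≤ (4 * (m : ℚ) + 3) / (3 * 2 ^ n)) := by
  have h := phiAux_one_div_two_pow_le n m
  rw [← evI_phiM_one_div_two_pow] at h
  constructor <;> intro hm <;> rw [hm] at h <;> norm_num [add_sub_assoc] at h ⊢ <;> exact h

/-- Lemma 2.7: `φ_m(1/q) ≤ (4m+4)/(3q)` for even `m` and `≤ (4m+3)/(3q)` for odd `m`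
(`q = 2ⁿ ≥ 2`). -/
theorem statement12 (m n : ℕ) (hn : 1 ≤ n) :
    (m % 2 = 0 → evI (phiM m) (1 / 2 ^ n) ≤ (4 * (m : ℚ) + 4) / (3 * 2 ^ n)) ∧
    (m % 2 = 1 → evI (phiM m) (1 / 2 ^ n) ≤ (4 * (m : ℚ) + 3) / (3 * 2 ^ n)) :=
  statement12_general m n

end
end

section
/- For every m ≥ 0 and every power of two q ≥ 2: φ_m(1 − 1/q) ≤ (4m+4)/(3q) if m is odd, and φ_m(1 − 1/q) ≤ (4m+3)/(3q) if m is even. -/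
open scoped BigOperators

noncomputable section

attribute [local instance] Classical.propDecidable

/-!
Write `aₙ(m) = φ_m(1 − 2⁻ⁿ)`. For `n ≥ 1` the point `1 − 2⁻⁽ⁿ⁺¹⁾` lies right of `1/2` and doubles
to `1 − 2⁻ⁿ`, so the defining recursion becomes a recursion in `n` alone, pairing each odd `m`
with `m + 1` and each even `m > 0` with `m − 1`. Bounding `ε(1 − 2⁻ⁿ) ≤ 2⁻ⁿ`, the bounds
`bₘ / 2ⁿ` with `bₘ = (4m+4)/3` (odd `m`) and `bₘ = (4m+3)/3` (even `m`) reproduce themselves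
exactly: `8 bₘ = 2 bₘ₊₁ + 8m + 6` for odd `m` and `8 bₘ = 2 bₘ₋₁ + 2 + 8m + 6` for even `m`.
-/

def phiEndBound (m : ℕ) : ℚ := if m % 2 = 1 then (4 * m + 4) / 3 else (4 * m + 3) / 3

lemma one_sub_inv_two_pow_mem_dyadicI (n : ℕ) : (1 : ℚ) - 1 / 2 ^ n ∈ dyadicI := by
  have h := dyadicI_mem (i := 2 ^ n - 1) (n := n) (Nat.sub_le _ _)
  rwa [Nat.cast_sub Nat.one_le_two_pow, sub_div, Nat.cast_pow, Nat.cast_ofNat,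
    div_self (by positivity), Nat.cast_one] at h

lemma evI_phiM_one_sub_inv_two_pow (m n : ℕ) :
    evI (phiM m) (1 - 1 / 2 ^ n) = phiAux n m (1 - 1 / 2 ^ n) := by
  rw [evI, dif_pos (one_sub_inv_two_pow_mem_dyadicI n)]
  show phiAux (padicValNat 2 ((1 : ℚ) - 1 / 2 ^ n).den) m _ = _
  rw [show ((1 : ℚ) - 1 / 2 ^ n).den = 2 ^ n by simp, padicValNat.prime_pow]

lemma phiAux_one_half (m : ℕ) : phiAux 1 m (1 / 2) = (4 * m + 3) / 8 := by
  rcases Nat.mod_two_eq_zero_or_one m with hm | hm <;> simp [phiAux, hm] <;> ring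

section RightHalf

variable {n m : ℕ} {t : ℚ}

lemma phiAux_succ_zero_of_half_lt (ht : 1 / 2 < t) :
    phiAux (n + 1) 0 t = (phiAux n 0 (2 * t - 1) + 6 * (1 - t)) / 8 := by
  rw [phiAux, if_neg (not_le.mpr ht)]
  simp

lemma phiAux_succ_of_even_of_half_lt (hm : m % 2 = 0) (hm₀ : m ≠ 0) (ht : 1 / 2 < t) :
    phiAux (n + 1) m t = (phiAux n (m - 1) (2 * t - 1) + ((2 * t - 1) - (2 * t - 1) ^ 2)
      + (8 * m + 6) * (1 - t)) / 8 := by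
  rw [phiAux, if_neg (not_le.mpr ht)]
  simp [hm, hm₀]

lemma phiAux_succ_of_odd_of_half_lt (hm : m % 2 = 1) (ht : 1 / 2 < t) :
    phiAux (n + 1) m t = (phiAux n (m + 1) (2 * t - 1) + (8 * m + 6) * (1 - t)) / 8 := by
  rw [phiAux, if_neg (not_le.mpr ht)]
  simp [hm, show m ≠ 0 by omega]

end RightHalf

lemma half_lt_one_sub_inv_two_pow {n : ℕ} (hn : 2 ≤ n) : (1 : ℚ) / 2 < 1 - 1 / 2 ^ n := by
  have : (1 : ℚ) / 2 ^ n ≤ 1 / 2 ^ 2 := one_div_pow_le_one_div_pow_of_le (by norm_num) hn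
  linarith

lemma two_mul_one_sub_inv_two_pow_succ_sub_one (n : ℕ) :
    2 * (1 - 1 / 2 ^ (n + 1) : ℚ) - 1 = 1 - 1 / 2 ^ n := by
  field_simp
  ring

lemma two_pow_mul_phiAux_one_sub_inv_two_pow_le {n : ℕ} (hn : 1 ≤ n) (m : ℕ) :
    2 ^ n * phiAux n m (1 - 1 / 2 ^ n) ≤ phiEndBound m := by
  induction n, hn using Nat.le_induction generalizing m with
  | base =>
    rw [show (1 : ℚ) - 1 / 2 ^ 1 = 1 / 2 by norm_num, phiAux_one_half, phiEndBound]
    have : (0 : ℚ) ≤ m := m.cast_nonneg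
    split_ifs <;> linarith
  | succ n hn ih =>
    have ht := half_lt_one_sub_inv_two_pow (by omega : 2 ≤ n + 1)
    rcases Nat.mod_two_eq_zero_or_one m with hm | hm
    · rcases eq_or_ne m 0 with rfl | hm₀
      · rw [phiAux_succ_zero_of_half_lt ht, two_mul_one_sub_inv_two_pow_succ_sub_one]
        have := ih 0
        calc _ = (2 * (2 ^ n * phiAux n 0 (1 - 1 / 2 ^ n)) + 6) / 8 := by field_simp; ring
          _ ≤ _ := by simp only [phiEndBound] at this ⊢; norm_num at this ⊢; linarith
      · rw [phiAux_succ_of_even_of_half_lt hm hm₀ ht, two_mul_one_sub_inv_two_pow_succ_sub_one]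
        have := ih (m - 1)
        have hε : 2 ^ n * ((1 - 1 / 2 ^ n) - (1 - 1 / 2 ^ n) ^ 2 : ℚ) ≤ 1 := by
          field_simp; nlinarith
        calc _ = (2 * (2 ^ n * phiAux n (m - 1) (1 - 1 / 2 ^ n))
              + 2 * (2 ^ n * ((1 - 1 / 2 ^ n) - (1 - 1 / 2 ^ n) ^ 2)) + (8 * m + 6)) / 8 := by
              field_simp; ring
          _ ≤ _ := by
            simp only [phiEndBound, hm, show (m - 1) % 2 = 1 by omega,
              Nat.cast_sub (Nat.one_le_iff_ne_zero.mpr hm₀)] at this ⊢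
            norm_num at this hε ⊢
            linarith
    · rw [phiAux_succ_of_odd_of_half_lt hm ht, two_mul_one_sub_inv_two_pow_succ_sub_one]
      have := ih (m + 1)
      calc _ = (2 * (2 ^ n * phiAux n (m + 1) (1 - 1 / 2 ^ n)) + (8 * m + 6)) / 8 := by
            field_simp; ring
        _ ≤ _ := by
          simp only [phiEndBound, hm, show (m + 1) % 2 = 0 by omega] at this ⊢
          norm_num at this ⊢
          linarith

/-- Lemma 2.8: `φ_m(1 − 1/q) ≤ (4m+4)/(3q)` for odd `m` and `≤ (4m+3)/(3q)` for even `m`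
(`q = 2ⁿ ≥ 2`). -/
theorem statement13 (m n : ℕ) (hn : 1 ≤ n) :
    (m % 2 = 1 → evI (phiM m) (1 - 1 / 2 ^ n) ≤ (4 * (m : ℚ) + 4) / (3 * 2 ^ n)) ∧
    (m % 2 = 0 → evI (phiM m) (1 - 1 / 2 ^ n) ≤ (4 * (m : ℚ) + 3) / (3 * 2 ^ n)) := by
  have h := two_pow_mul_phiAux_one_sub_inv_two_pow_le hn m
  rw [← evI_phiM_one_sub_inv_two_pow, phiEndBound] at h
  constructor <;> intro hm <;> simp only [hm, if_true, zero_ne_one, if_false] at h <;>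
    rw [le_div_iff₀ (by positivity)] <;> linarith
end
end
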